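/- arXiv:0806.3739 — 2 statements merged into one kernel-verified Lean document; each statement's English description precedes it below -/
import Mathlib

section
/- For every k ≥ 1, the partitions μ = (k+1, …, k+1, k−1) with k parts equal to k+1, and λ = (k+1, …, k+1, k, k) with k−1 parts equal to k+1, are distinct partitions of n = k²+2k−1 with exactly the same set of k-deletions. -/
/-
A `k`-deletion `δ` of either partition has `k² + k − 1` cells, one fewer than a `k × (k+1)`
rectangle. Since `δ` is nonincreasing, `(j + 1) · δ j ≤ |δ|`, so `δ` cannot fill row `k − 1` up
to length `k + 1`, nor row `k` up to length `k`. These are exactly the two cells in which `μ`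
and `λ` differ, so a subpartition of either one with `k² + k − 1` cells lies inside the other.
-/

/-- A partition: a nonincreasing sequence of naturals (rows indexed from 0),
with finitely many nonzero parts. -/
def IsPartition (f : ℕ → ℕ) : Prop :=
  (∀ ⦃i j : ℕ⦄, i ≤ j → f j ≤ f i) ∧ {i | f i ≠ 0}.Finite

/-- The number of cells of a partition. -/
noncomputable def psize (f : ℕ → ℕ) : ℕ := ∑ᶠ i, f i

/-- `δ` is a `k`-deletion of `f`: a partition contained in `f` with `k` fewer cells. -/
def IsDeletion (k : ℕ) (δ f : ℕ → ℕ) : Prop :=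
  IsPartition δ ∧ (∀ i, δ i ≤ f i) ∧ psize f = psize δ + k

/-- The conjugate: `conj f c` is the number of cells in (0-indexed) column `c`. -/
noncomputable def conj (f : ℕ → ℕ) (c : ℕ) : ℕ := Set.ncard {i | c < f i}

open Finset

lemma psize_eq_sum_range {f : ℕ → ℕ} {N : ℕ} (hN : ∀ i, N ≤ i → f i = 0) :
    psize f = ∑ i ∈ range N, f i := by
  refine finsum_eq_finsetSum_of_support_subset f fun i hi => ?_
  by_contra h
  exact hi (hN i (by simpa using h))

lemma isPartition_of_antitone {f : ℕ → ℕ} {N : ℕ} (hf : Antitone f)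
    (hN : ∀ i, N ≤ i → f i = 0) : IsPartition f :=
  ⟨hf, (Set.finite_Iio N).subset fun i hi => by
    by_contra h
    exact hi (hN i (not_lt.mp h))⟩

lemma mul_le_psize {f : ℕ → ℕ} {N : ℕ} (hf : Antitone f) (hN : ∀ i, N ≤ i → f i = 0)
    (j : ℕ) : (j + 1) * f j ≤ psize f := by
  rcases lt_or_ge j N with hj | hj
  · rw [psize_eq_sum_range hN]
    calc (j + 1) * f j = ∑ _i ∈ range (j + 1), f j := by simp
      _ ≤ ∑ i ∈ range (j + 1), f i :=
        sum_le_sum fun i hi => hf (Nat.lt_succ_iff.mp (mem_range.mp hi))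
      _ ≤ ∑ i ∈ range N, f i := sum_le_sum_of_subset (range_subset_range.mpr hj)
  · simp [hN j hj]

lemma lt_of_psize_lt_mul {f : ℕ → ℕ} {N j c : ℕ} (hf : Antitone f)
    (hN : ∀ i, N ≤ i → f i = 0) (h : psize f < (j + 1) * c) : f j < c := by
  by_contra! hc
  exact (Nat.mul_le_mul_left (j + 1) hc |>.trans (mul_le_psize hf hN j)).not_gt h

lemma IsDeletion.of_le {k : ℕ} {δ f g : ℕ → ℕ} (h : IsDeletion k δ f) (hle : ∀ i, δ i ≤ g i)
    (hfg : psize f = psize g) : IsDeletion k δ g :=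
  ⟨h.1, hle, hfg ▸ h.2.2⟩

lemma IsDeletion.eq_zero {k N : ℕ} {δ f : ℕ → ℕ} (h : IsDeletion k δ f)
    (hN : ∀ i, N ≤ i → f i = 0) (i : ℕ) (hi : N ≤ i) : δ i = 0 :=
  Nat.eq_zero_of_le_zero (hN i hi ▸ h.2.1 i)

def sharpMu (k : ℕ) : ℕ → ℕ := fun i => if i < k then k + 1 else if i = k then k - 1 else 0

def sharpLam (k : ℕ) : ℕ → ℕ := fun i => if i < k - 1 then k + 1 else if i < k + 1 then k else 0

section sharp

variable {k : ℕ}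

lemma sharpMu_eq_zero {i : ℕ} (hi : k + 1 ≤ i) : sharpMu k i = 0 := by
  simp only [sharpMu]
  split_ifs <;> omega

lemma sharpLam_eq_zero {i : ℕ} (hi : k + 1 ≤ i) : sharpLam k i = 0 := by
  simp only [sharpLam]
  split_ifs <;> omega

lemma sharpMu_antitone : Antitone (sharpMu k) := fun i j hij => by
  simp only [sharpMu]
  split_ifs <;> omega

lemma sharpLam_antitone : Antitone (sharpLam k) := fun i j hij => by
  simp only [sharpLam]
  split_ifs <;> omega

lemma sharpMu_ne_sharpLam (hk : 1 ≤ k) : sharpMu k ≠ sharpLam k := fun h => by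
  have := congrFun h k
  simp only [sharpMu, sharpLam] at this
  split_ifs at this <;> omega

lemma psize_sharpMu : psize (sharpMu k) = k ^ 2 + 2 * k - 1 := by
  have hrow : ∀ i ∈ range k, sharpMu k i = k + 1 := fun i hi => if_pos (mem_range.mp hi)
  have hlast : sharpMu k k = k - 1 := by simp [sharpMu]
  rw [psize_eq_sum_range fun i => sharpMu_eq_zero (i := i), sum_range_succ, sum_congr rfl hrow,
    hlast, sum_const, card_range, smul_eq_mul]
  rcases k with _ | m
  · rfl
  · ring_nf; omega

lemma psize_sharpLam : psize (sharpLam k) = k ^ 2 + 2 * k - 1 := by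
  rw [psize_eq_sum_range fun i => sharpLam_eq_zero (i := i)]
  rcases k with _ | m
  · simp [sharpLam]
  have hrow : ∀ i ∈ range m, sharpLam (m + 1) i = m + 2 := fun i hi => if_pos (by simpa using hi)
  have hm : sharpLam (m + 1) m = m + 1 := by simp [sharpLam]
  have hm1 : sharpLam (m + 1) (m + 1) = m + 1 := by simp [sharpLam]
  rw [sum_range_succ, sum_range_succ, sum_congr rfl hrow, hm, hm1, sum_const, card_range,
    smul_eq_mul]
  ring_nf; omega

lemma IsDeletion.psize_add_one {δ f : ℕ → ℕ} (hk : 1 ≤ k) (h : IsDeletion k δ f)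
    (hf : psize f = k ^ 2 + 2 * k - 1) : psize δ + 1 = k * (k + 1) := by
  have hsize := h.2.2
  have : k * (k + 1) = k ^ 2 + k := by ring
  omega

lemma IsDeletion.le_sharpLam {δ : ℕ → ℕ} (hk : 1 ≤ k) (h : IsDeletion k δ (sharpMu k)) (i : ℕ) :
    δ i ≤ sharpLam k i := by
  have hsize := h.psize_add_one hk psize_sharpMu
  have hcorner : δ (k - 1) < k + 1 :=
    lt_of_psize_lt_mul h.1.1 (h.eq_zero fun _ => sharpMu_eq_zero) (by
      rw [Nat.sub_add_cancel hk]; omega)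
  have hμ := h.2.1 i
  simp only [sharpLam, sharpMu] at hμ ⊢
  split_ifs at hμ ⊢ <;> first
    | omega
    | have := h.1.1 (show k - 1 ≤ i by omega); omega

lemma IsDeletion.le_sharpMu {δ : ℕ → ℕ} (hk : 1 ≤ k) (h : IsDeletion k δ (sharpLam k)) (i : ℕ) :
    δ i ≤ sharpMu k i := by
  have hsize := h.psize_add_one hk psize_sharpLam
  have hcorner : δ k < k :=
    lt_of_psize_lt_mul h.1.1 (h.eq_zero fun _ => sharpLam_eq_zero) (by rw [mul_comm]; omega)
  have hlam := h.2.1 i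
  simp only [sharpLam, sharpMu] at hlam ⊢
  split_ifs at hlam ⊢ <;> first
    | omega
    | have := h.1.1 (show k ≤ i by omega); omega

end sharp

/-- The sharp counterexample: μ = (k+1,…,k+1,k−1) (k copies of k+1) and
λ = (k+1,…,k+1,k,k) (k−1 copies of k+1) are distinct partitions of k²+2k−1
with the same set of k-deletions. -/
theorem sharp_pair (k : ℕ) (hk : 1 ≤ k) :
    let μ : ℕ → ℕ := fun i => if i < k then k + 1 else if i = k then k - 1 else 0
    let lam : ℕ → ℕ := fun i => if i < k - 1 then k + 1 else if i < k + 1 then k else 0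
    IsPartition μ ∧ IsPartition lam ∧ μ ≠ lam ∧
      psize μ = k ^ 2 + 2 * k - 1 ∧ psize lam = k ^ 2 + 2 * k - 1 ∧
      (∀ δ : ℕ → ℕ, IsDeletion k δ μ ↔ IsDeletion k δ lam) := by
  intro μ lam
  exact ⟨isPartition_of_antitone sharpMu_antitone fun _ => sharpMu_eq_zero,
    isPartition_of_antitone sharpLam_antitone fun _ => sharpLam_eq_zero,
    sharpMu_ne_sharpLam hk, psize_sharpMu, psize_sharpLam, fun δ =>
    ⟨fun h => h.of_le (h.le_sharpLam hk) (psize_sharpMu.trans psize_sharpLam.symm),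
      fun h => h.of_le (h.le_sharpMu hk) (psize_sharpLam.trans psize_sharpMu.symm)⟩⟩
end

section
/- Let λ be a partition with λ_k ≥ k (λ contains cell (k,k)) and with at least 2k cells outside the k×k square. Then λ has a k-deletion δ with δ_k ≥ k, i.e., a k-deletion still containing the cell (k,k). -/
/-!
Intervals of Young's lattice are graded: if `g ≤ f` are partitions, then `f` can be shrunk one
cell at a time to any size between `|g|` and `|f|` while staying above `g`, because the last cell
of the last row in which `f` exceeds `g` is always a corner of `f`. Taking for `g` the part of `λ`
inside the `k × k` square, which contains the cell `(k, k)` and has at most `|λ| - 2k` cells,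
gives the required `k`-deletion.
-/

open Function

lemma IsDeletion.trans {a b : ℕ} {δ ε f : ℕ → ℕ} (hδ : IsDeletion a δ ε)
    (hε : IsDeletion b ε f) : IsDeletion (a + b) δ f :=
  ⟨hδ.1, fun i => (hδ.2.1 i).trans (hε.2.1 i), by rw [hε.2.2, hδ.2.2]; ring⟩

namespace IsPartition

variable {f g : ℕ → ℕ}

lemma psize_mono (hf : IsPartition f) (hg : IsPartition g) (h : ∀ i, f i ≤ g i) :
    psize f ≤ psize g :=
  finsum_le_finsum' hf.2 hg.2 h

lemma update_pred (hf : IsPartition f) {i : ℕ} (hi : f (i + 1) < f i) :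
    IsPartition (update f i (f i - 1)) := by
  refine ⟨fun j l hjl => ?_, hf.2.subset fun j hj => ?_⟩
  · have hfjl := hf.1 hjl
    rcases eq_or_ne l i with rfl | hl
    · rcases eq_or_ne j l with rfl | hj
      · rfl
      · simp only [update_self, update_of_ne hj]; omega
    · rcases eq_or_ne j i with rfl | hj
      · have : f l ≤ f (j + 1) := hf.1 (by omega)
        simp only [update_self, update_of_ne hl]; omega
      · simpa only [update_of_ne hl, update_of_ne hj] using hfjl
  · rcases eq_or_ne j i with rfl | hji
    · simp only [Set.mem_ofPred_eq, update_self] at hj ⊢; omega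
    · simpa only [Set.mem_ofPred_eq, update_of_ne hji] using hj

lemma isDeletion_update_pred (hf : IsPartition f) {i : ℕ} (hi : f (i + 1) < f i) :
    IsDeletion 1 (update f i (f i - 1)) f := by
  have hsplit (j : ℕ) : f j = update f i (f i - 1) j + Pi.single (M := fun _ => ℕ) i 1 j := by
    rcases eq_or_ne j i with rfl | hj
    · simp only [update_self, Pi.single_eq_same]; omega
    · simp [hj]
  refine ⟨hf.update_pred hi, fun j => (Nat.le_add_right _ _).trans_eq (hsplit j).symm, ?_⟩
  rw [psize, finsum_congr hsplit, finsum_add_distrib (hf.update_pred hi).2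
    ((Set.finite_singleton i).subset Pi.support_single_subset),
    finsum_eq_single (Pi.single i 1) i fun j hj => Pi.single_eq_of_ne hj 1, Pi.single_eq_same,
    psize]

lemma indicator_Iio_min (hf : IsPartition f) (k m : ℕ) :
    IsPartition ((Set.Iio k).indicator fun i => min (f i) m) := by
  refine ⟨fun i j hij => ?_, (Set.finite_Iio k).subset Set.support_indicator_subset⟩
  by_cases hj : j < k
  · rw [Set.indicator_of_mem (Set.mem_Iio.mpr hj),
      Set.indicator_of_mem (Set.mem_Iio.mpr (hij.trans_lt hj))]
    exact min_le_min_right m (hf.1 hij)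
  · rw [Set.indicator_of_notMem (mt Set.mem_Iio.mp hj)]
    exact Nat.zero_le _

lemma exists_isDeletion_one_ge (hf : IsPartition f) (hg : IsPartition g)
    (hgf : ∀ i, g i ≤ f i) (hlt : psize g < psize f) :
    ∃ δ, IsDeletion 1 δ f ∧ ∀ i, g i ≤ δ i := by
  set S := {i | g i < f i}
  have hS : S.Finite := hf.2.subset fun i (hi : g i < f i) => (by omega : f i ≠ 0)
  have hSne : S.Nonempty := by
    by_contra hempty
    exact hlt.not_ge <| hf.psize_mono hg fun i => not_lt.mp fun hi => hempty ⟨i, hi⟩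
  obtain ⟨i, hi : g i < f i, hmax⟩ := S.exists_max_image id hS hSne
  have hcorner : f (i + 1) < f i := by
    have hnext : ¬ g (i + 1) < f (i + 1) := fun h => by simpa using hmax _ h
    have := hg.1 (Nat.le_add_right i 1)
    omega
  refine ⟨update f i (f i - 1), hf.isDeletion_update_pred hcorner, fun j => ?_⟩
  rcases eq_or_ne j i with rfl | hj
  · rw [update_self]; omega
  · rw [update_of_ne hj]; exact hgf j

lemma exists_isDeletion_ge (hg : IsPartition g) (k : ℕ) (hf : IsPartition f)
    (hgf : ∀ i, g i ≤ f i) (hsize : psize g + k ≤ psize f) :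
    ∃ δ, IsDeletion k δ f ∧ ∀ i, g i ≤ δ i := by
  induction k generalizing f with
  | zero => exact ⟨f, ⟨hf, fun _ => le_rfl, rfl⟩, hgf⟩
  | succ k ih =>
    obtain ⟨ε, hε, hgε⟩ := hf.exists_isDeletion_one_ge hg hgf (by omega)
    obtain ⟨δ, hδ, hgδ⟩ := ih hε.1 hgε (by have := hε.2.2; omega)
    exact ⟨δ, hδ.trans hε, hgδ⟩

end IsPartition

theorem deletion_keeping_square_general (k : ℕ) (f : ℕ → ℕ)
    (hf : IsPartition f) (hcell : k ≤ f (k - 1))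
    (hout : 2 * k ≤ psize f - ∑ᶠ i ∈ Set.Iio k, min (f i) k) :
    ∃ δ : ℕ → ℕ, IsDeletion k δ f ∧ k ≤ δ (k - 1) := by
  set square := (Set.Iio k).indicator fun i => min (f i) k
  have hsquare_size : psize square = ∑ᶠ i ∈ Set.Iio k, min (f i) k :=
    (finsum_mem_def _ _).symm
  have hsquare_le : ∀ i, square i ≤ f i := fun i =>
    Set.indicator_le (fun i _ => min_le_left (f i) k) i
  have hsquare_cell : k ≤ square (k - 1) := by
    rcases Nat.eq_zero_or_pos k with rfl | hk
    · exact Nat.zero_le _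
    · have hrow : k - 1 ∈ Set.Iio k := Set.mem_Iio.mpr (Nat.sub_one_lt_of_lt hk)
      exact (le_min hcell le_rfl).trans_eq (Set.indicator_of_mem hrow fun i => min (f i) k).symm
  have hsquare : IsPartition square := hf.indicator_Iio_min k k
  have hsquare_size_le := hsquare.psize_mono hf hsquare_le
  obtain ⟨δ, hδ, hsquare_δ⟩ := hsquare.exists_isDeletion_ge k hf hsquare_le (by omega)
  exact ⟨δ, hδ, hsquare_cell.trans (hsquare_δ _)⟩

/-- If λ contains (k,k) and has ≥ 2k cells outside the k×k square, then λ has a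
k-deletion still containing the cell (k,k). -/
theorem deletion_keeping_square (k : ℕ) (hk : 1 ≤ k) (f : ℕ → ℕ)
    (hf : IsPartition f) (hcell : k ≤ f (k - 1))
    (hout : 2 * k ≤ psize f - ∑ᶠ i ∈ Set.Iio k, min (f i) k) :
    ∃ δ : ℕ → ℕ, IsDeletion k δ f ∧ k ≤ δ (k - 1) :=
  deletion_keeping_square_general k f hf hcell hout
end
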